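/- arXiv:1910.08460 — 2 statements merged into one kernel-verified Lean document; each statement's English description precedes it below -/
import Mathlib

section
/- Suppose δ_j < 1/2. Then the (j+1)-th and (j−1)-th eigenvalues of Σ + E satisfy λ̂_{j+1} − λ_{j+1} ≤ δ_j (λ_j − λ_{j+1}) and λ̂_{j−1} − λ_{j−1} ≥ −δ_j (λ_{j−1} − λ_j). -/
/-!
Courant–Fischer. The span of the `u k` with `k > j` and the span of the `uh k` with `k ≤ j + 1`
have dimensions adding up to `d + 1`, so they share a nonzero vector `x`. On the second span the
quadratic form of `Σ + E` is at least `lamh (j + 1) * ‖x‖²`. On the first, `x = T y` with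
`T = |R_j|^{1/2} + g_j^{-1/2} P_j` and `y = |R_j|^{-1/2} x`, hence
`|x ⬝ E x| = |y ⬝ (T E T) y| ≤ δ_j ‖y‖² = δ_j ∑ |λ_k - λ_j| ⟨u_k, x⟩²`,
and the form of `Σ + E` is at most
`max_{k > j} ((1 - δ_j) λ_k + δ_j λ_j) ‖x‖² = (λ_{j+1} + δ_j (λ_j - λ_{j+1})) ‖x‖²` as `δ_j ≤ 1`.
The bound on `lamh (j - 1)` is the mirror image, with the spans of the `u k`, `k ≤ j - 1`, and of
the `uh k`, `k ≥ j - 1`.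
-/

open Matrix Finset

noncomputable def opNorm {d : ℕ} (A : Matrix (Fin d) (Fin d) ℝ) : ℝ :=
  ‖Matrix.toEuclideanCLM (𝕜 := ℝ) A‖

noncomputable def hsNorm {d : ℕ} (A : Matrix (Fin d) (Fin d) ℝ) : ℝ :=
  Real.sqrt (Matrix.trace (Aᵀ * A))

noncomputable def proj {d : ℕ} (u : Fin d → ℝ) : Matrix (Fin d) (Fin d) ℝ :=
  Matrix.vecMulVec u u

/-- `|R_j|^{1/2}` : square root of the absolute value of the reduced resolvent. -/
noncomputable def sqrtAbsRes {d : ℕ} (lam : Fin d → ℝ) (u : Fin d → Fin d → ℝ)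
    (j : Fin d) : Matrix (Fin d) (Fin d) ℝ :=
  ∑ k ∈ Finset.univ.filter (fun k => k ≠ j), (Real.sqrt |lam k - lam j|)⁻¹ • proj (u k)

/-- `|R_j|^{-1/2}`. -/
noncomputable def invSqrtAbsRes {d : ℕ} (lam : Fin d → ℝ) (u : Fin d → Fin d → ℝ)
    (j : Fin d) : Matrix (Fin d) (Fin d) ℝ :=
  ∑ k ∈ Finset.univ.filter (fun k => k ≠ j), Real.sqrt |lam k - lam j| • proj (u k)

/-- the reduced resolvent `R_j`. -/
noncomputable def res {d : ℕ} (lam : Fin d → ℝ) (u : Fin d → Fin d → ℝ)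
    (j : Fin d) : Matrix (Fin d) (Fin d) ℝ :=
  ∑ k ∈ Finset.univ.filter (fun k => k ≠ j), (lam k - lam j)⁻¹ • proj (u k)

/-- `δ_j`. -/
noncomputable def delta {d : ℕ} (lam : Fin d → ℝ) (u : Fin d → Fin d → ℝ) (j : Fin d)
    (gj : ℝ) (E : Matrix (Fin d) (Fin d) ℝ) : ℝ :=
  opNorm ((sqrtAbsRes lam u j + (Real.sqrt gj)⁻¹ • proj (u j)) * E *
    (sqrtAbsRes lam u j + (Real.sqrt gj)⁻¹ • proj (u j)))

/-- `δ'_j`. -/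
noncomputable def delta' {d : ℕ} (lam : Fin d → ℝ) (u : Fin d → Fin d → ℝ) (j : Fin d)
    (gj : ℝ) (E : Matrix (Fin d) (Fin d) ℝ) : ℝ :=
  max (opNorm (sqrtAbsRes lam u j * E * sqrtAbsRes lam u j))
    (max ((Real.sqrt gj)⁻¹ * hsNorm (sqrtAbsRes lam u j * E * proj (u j)))
      (gj⁻¹ * hsNorm (proj (u j) * E * proj (u j))))

theorem Submodule.exists_ne_zero_mem_inf_of_finrank_lt_add {K V : Type*} [DivisionRing K]
    [AddCommGroup V] [Module K V] [FiniteDimensional K V] {p q : Submodule K V}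
    (h : Module.finrank K V < Module.finrank K p + Module.finrank K q) :
    ∃ x ∈ p ⊓ q, x ≠ 0 := by
  have hsup := (p ⊔ q).finrank_le
  have hsum := Submodule.finrank_sup_add_finrank_inf_eq p q
  exact Submodule.exists_mem_ne_zero_of_ne_bot (Submodule.one_le_finrank_iff.mp (by omega))

lemma le_of_quadForm_bounds {m : Type*} [Fintype m] {A : Matrix m m ℝ}
    {p q : Submodule ℝ (m → ℝ)} {α β : ℝ}
    (hpq : Fintype.card m < Module.finrank ℝ p + Module.finrank ℝ q)
    (hp : ∀ x ∈ p, x ⬝ᵥ (A *ᵥ x) ≤ β * (x ⬝ᵥ x))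
    (hq : ∀ x ∈ q, α * (x ⬝ᵥ x) ≤ x ⬝ᵥ (A *ᵥ x)) : α ≤ β := by
  obtain ⟨x, ⟨hxp, hxq⟩, hx⟩ := Submodule.exists_ne_zero_mem_inf_of_finrank_lt_add (p := p)
    (q := q) (by rwa [Module.finrank_fintype_fun_eq_card])
  have hxx : 0 < x ⬝ᵥ x := by simpa using dotProduct_star_self_pos_iff.mpr hx
  exact le_of_mul_le_mul_right ((hq x hxq).trans (hp x hxp)) hxx

lemma abs_quadForm_le_opNorm {d : ℕ} (A : Matrix (Fin d) (Fin d) ℝ) (x : Fin d → ℝ) :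
    |x ⬝ᵥ (A *ᵥ x)| ≤ opNorm A * (x ⬝ᵥ x) := by
  set y : EuclideanSpace ℝ (Fin d) := WithLp.toLp 2 x
  have hquad : x ⬝ᵥ (A *ᵥ x) = inner ℝ y (toEuclideanCLM (𝕜 := ℝ) A y) := by
    simp [y, EuclideanSpace.inner_toLp_toLp, dotProduct_comm]
  have hnorm : x ⬝ᵥ x = ‖y‖ ^ 2 := by
    rw [← real_inner_self_eq_norm_sq, EuclideanSpace.inner_toLp_toLp, star_trivial]
  rw [hquad, hnorm, opNorm]
  calc _ ≤ ‖y‖ * ‖toEuclideanCLM (𝕜 := ℝ) A y‖ := abs_real_inner_le_norm _ _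
    _ ≤ ‖y‖ * (‖toEuclideanCLM (𝕜 := ℝ) A‖ * ‖y‖) := by
        gcongr
        exact ContinuousLinearMap.le_opNorm _ _
    _ = _ := by ring

abbrev DotOrthonormal {ι m : Type*} [DecidableEq ι] [Fintype m] (v : ι → m → ℝ) : Prop :=
  ∀ k l, v k ⬝ᵥ v l = if k = l then 1 else 0

namespace DotOrthonormal

variable {ι m : Type*} [DecidableEq ι] [Fintype m] {v : ι → m → ℝ}

lemma dotProduct_sum_smul (hv : DotOrthonormal v) (S : Finset ι) (c : ι → ℝ) (l : ι) :
    v l ⬝ᵥ ∑ k ∈ S, c k • v k = if l ∈ S then c l else 0 := by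
  simp [dotProduct_sum, dotProduct_smul, hv l, eq_comm (a := l)]

lemma sum_smul_dotProduct_self (hv : DotOrthonormal v) (S : Finset ι) (c : ι → ℝ) :
    (∑ k ∈ S, c k • v k) ⬝ᵥ (∑ k ∈ S, c k • v k) = ∑ k ∈ S, c k ^ 2 := by
  rw [sum_dotProduct]
  refine sum_congr rfl fun k hk => ?_
  rw [smul_dotProduct, hv.dotProduct_sum_smul, if_pos hk, smul_eq_mul, sq]

lemma linearIndependent (hv : DotOrthonormal v) : LinearIndependent ℝ v := by
  rw [linearIndependent_iff']
  intro S c hc l hl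
  simpa [hv.dotProduct_sum_smul, hl] using congrArg (v l ⬝ᵥ ·) hc

lemma finrank_span_image (hv : DotOrthonormal v) (S : Finset ι) :
    Module.finrank ℝ (Submodule.span ℝ (v '' S)) = S.card := by
  rw [Set.image_eq_range, finrank_span_eq_card (b := fun k : (S : Set ι) => v k)
    (hv.linearIndependent.comp _ Subtype.val_injective)]
  simp

variable {S : Finset ι} {x : m → ℝ}

lemma sum_dotProduct_smul_of_mem_span (hv : DotOrthonormal v)
    (hx : x ∈ Submodule.span ℝ (v '' S)) : ∑ k ∈ S, (v k ⬝ᵥ x) • v k = x := by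
  induction hx using Submodule.span_induction with
  | mem y hy =>
    obtain ⟨l, hl : l ∈ S, rfl⟩ := hy
    simp [hv _ l, hl]
  | zero => simp
  | add y z _ _ hy hz => simp only [dotProduct_add, add_smul, sum_add_distrib, hy, hz]
  | smul r y _ hy => simp only [dotProduct_smul, smul_eq_mul, mul_smul, ← smul_sum, hy]

lemma dotProduct_eq_zero_of_mem_span (hv : DotOrthonormal v)
    (hx : x ∈ Submodule.span ℝ (v '' S)) {k : ι} (hk : k ∉ S) : v k ⬝ᵥ x = 0 := by
  rw [← hv.sum_dotProduct_smul_of_mem_span hx, hv.dotProduct_sum_smul, if_neg hk]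

lemma dotProduct_self_of_mem_span (hv : DotOrthonormal v)
    (hx : x ∈ Submodule.span ℝ (v '' S)) : x ⬝ᵥ x = ∑ k ∈ S, (v k ⬝ᵥ x) ^ 2 := by
  conv_lhs => rw [← hv.sum_dotProduct_smul_of_mem_span hx]
  exact hv.sum_smul_dotProduct_self S _

end DotOrthonormal

section Spectral

variable {d : ℕ}

lemma proj_mulVec (w x : Fin d → ℝ) : proj w *ᵥ x = (w ⬝ᵥ x) • w := by
  simp [proj, vecMulVec_mulVec]

lemma transpose_proj (w : Fin d → ℝ) : (proj w)ᵀ = proj w :=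
  transpose_vecMulVec w w

lemma quadForm_spectralSum {ι : Type*} [Fintype ι] (v : ι → Fin d → ℝ) (f : ι → ℝ) (x : Fin d → ℝ) :
    x ⬝ᵥ ((∑ k, f k • proj (v k)) *ᵥ x) = ∑ k, f k * (v k ⬝ᵥ x) ^ 2 := by
  rw [sum_mulVec, dotProduct_sum]
  refine sum_congr rfl fun k _ => ?_
  rw [smul_mulVec, proj_mulVec, dotProduct_smul, dotProduct_smul, dotProduct_comm x, smul_eq_mul,
    smul_eq_mul, sq]

variable {ι : Type*} [DecidableEq ι] {v : ι → Fin d → ℝ}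

lemma DotOrthonormal.spectralSum_mulVec (hv : DotOrthonormal v) (F : Finset ι) (f : ι → ℝ)
    (k : ι) : (∑ l ∈ F, f l • proj (v l)) *ᵥ v k = if k ∈ F then f k • v k else 0 := by
  simp [sum_mulVec, smul_mulVec, proj_mulVec, hv _ k]

variable {S : Finset ι} {x : Fin d → ℝ}

lemma DotOrthonormal.quadForm_spectralSum_of_mem_span [Fintype ι] (hv : DotOrthonormal v)
    (hx : x ∈ Submodule.span ℝ (v '' S)) (f : ι → ℝ) :
    x ⬝ᵥ ((∑ k, f k • proj (v k)) *ᵥ x) = ∑ k ∈ S, f k * (v k ⬝ᵥ x) ^ 2 := by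
  rw [quadForm_spectralSum]
  refine (sum_subset (subset_univ S) fun k _ hk => ?_).symm
  rw [hv.dotProduct_eq_zero_of_mem_span hx hk]
  ring

lemma DotOrthonormal.le_quadForm_spectralSum [Fintype ι] (hv : DotOrthonormal v)
    (hx : x ∈ Submodule.span ℝ (v '' S)) {f : ι → ℝ} {α : ℝ} (hf : ∀ k ∈ S, α ≤ f k) :
    α * (x ⬝ᵥ x) ≤ x ⬝ᵥ ((∑ k, f k • proj (v k)) *ᵥ x) := by
  rw [hv.quadForm_spectralSum_of_mem_span hx, hv.dotProduct_self_of_mem_span hx, mul_sum]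
  gcongr with k hk
  exact hf k hk

lemma DotOrthonormal.quadForm_spectralSum_le [Fintype ι] (hv : DotOrthonormal v)
    (hx : x ∈ Submodule.span ℝ (v '' S)) {f : ι → ℝ} {β : ℝ} (hf : ∀ k ∈ S, f k ≤ β) :
    x ⬝ᵥ ((∑ k, f k • proj (v k)) *ᵥ x) ≤ β * (x ⬝ᵥ x) := by
  rw [hv.quadForm_spectralSum_of_mem_span hx, hv.dotProduct_self_of_mem_span hx, mul_sum]
  gcongr with k hk
  exact hf k hk

end Spectral

section Resolvent

variable {d : ℕ} {lam : Fin d → ℝ} {u : Fin d → Fin d → ℝ} {j : Fin d}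

lemma transpose_sqrtAbsRes : (sqrtAbsRes lam u j)ᵀ = sqrtAbsRes lam u j := by
  simp [sqrtAbsRes, transpose_sum, transpose_proj]

lemma sqrtAbsRes_mulVec (hu : DotOrthonormal u) {k : Fin d} (hk : k ≠ j) :
    sqrtAbsRes lam u j *ᵥ u k = (√|lam k - lam j|)⁻¹ • u k := by
  rw [sqrtAbsRes, hu.spectralSum_mulVec, if_pos (by simpa using hk)]

lemma abs_quadForm_le_delta (hu : DotOrthonormal u) (E : Matrix (Fin d) (Fin d) ℝ) (gj : ℝ)
    {S : Finset (Fin d)} (hS : ∀ k ∈ S, lam k ≠ lam j) {x : Fin d → ℝ}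
    (hx : x ∈ Submodule.span ℝ (u '' S)) :
    |x ⬝ᵥ (E *ᵥ x)| ≤ delta lam u j gj E * ∑ k ∈ S, |lam k - lam j| * (u k ⬝ᵥ x) ^ 2 := by
  set T := sqrtAbsRes lam u j + (√gj)⁻¹ • proj (u j)
  set y := ∑ k ∈ S, (√|lam k - lam j| * (u k ⬝ᵥ x)) • u k
  have hT : Tᵀ = T := by simp [T, transpose_sqrtAbsRes, transpose_proj]
  have hTy : T *ᵥ y = x := by
    conv_rhs => rw [← hu.sum_dotProduct_smul_of_mem_span hx]
    rw [mulVec_sum]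
    refine sum_congr rfl fun k hk => ?_
    have hkj : k ≠ j := fun h => hS k hk (h ▸ rfl)
    have hsqrt : √|lam k - lam j| ≠ 0 :=
      Real.sqrt_ne_zero'.mpr (abs_pos.mpr (sub_ne_zero.mpr (hS k hk)))
    rw [mulVec_smul, add_mulVec, sqrtAbsRes_mulVec hu hkj, smul_mulVec, proj_mulVec, hu j k,
      if_neg hkj.symm, zero_smul, smul_zero, add_zero, smul_smul,
      mul_right_comm, mul_inv_cancel₀ hsqrt, one_mul]
  have hy : y ⬝ᵥ y = ∑ k ∈ S, |lam k - lam j| * (u k ⬝ᵥ x) ^ 2 := by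
    simp_rw [y, hu.sum_smul_dotProduct_self, mul_pow, Real.sq_sqrt (abs_nonneg _)]
  calc |x ⬝ᵥ (E *ᵥ x)| = |y ⬝ᵥ ((T * E * T) *ᵥ y)| := by
        rw [← mulVec_mulVec, ← mulVec_mulVec, dotProduct_mulVec y T, ← mulVec_transpose, hT, hTy]
    _ ≤ _ := hy ▸ abs_quadForm_le_opNorm _ y

end Resolvent

section Perturbation

variable {d : ℕ} {lam : Fin d → ℝ} {u : Fin d → Fin d → ℝ} {j : Fin d} {gj : ℝ}
  {E : Matrix (Fin d) (Fin d) ℝ} {S : Finset (Fin d)} {x : Fin d → ℝ}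

lemma quadForm_add_le (hu : DotOrthonormal u) (hS : ∀ k ∈ S, lam k ≠ lam j)
    (hx : x ∈ Submodule.span ℝ (u '' S)) {β : ℝ}
    (hβ : ∀ k ∈ S, lam k + delta lam u j gj E * |lam k - lam j| ≤ β) :
    x ⬝ᵥ (((∑ k, lam k • proj (u k)) + E) *ᵥ x) ≤ β * (x ⬝ᵥ x) := by
  have hE := (le_abs_self _).trans (abs_quadForm_le_delta hu E gj hS hx)
  calc x ⬝ᵥ (((∑ k, lam k • proj (u k)) + E) *ᵥ x)
      = ∑ k ∈ S, lam k * (u k ⬝ᵥ x) ^ 2 + x ⬝ᵥ (E *ᵥ x) := by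
        rw [add_mulVec, dotProduct_add, hu.quadForm_spectralSum_of_mem_span hx]
    _ ≤ ∑ k ∈ S, (lam k + delta lam u j gj E * |lam k - lam j|) * (u k ⬝ᵥ x) ^ 2 := by
        simp only [add_mul, sum_add_distrib, mul_assoc, ← mul_sum]
        gcongr
    _ ≤ β * (x ⬝ᵥ x) := by
        rw [hu.dotProduct_self_of_mem_span hx, mul_sum]
        gcongr with k hk
        exact hβ k hk

lemma le_quadForm_add (hu : DotOrthonormal u) (hS : ∀ k ∈ S, lam k ≠ lam j)
    (hx : x ∈ Submodule.span ℝ (u '' S)) {α : ℝ}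
    (hα : ∀ k ∈ S, α ≤ lam k - delta lam u j gj E * |lam k - lam j|) :
    α * (x ⬝ᵥ x) ≤ x ⬝ᵥ (((∑ k, lam k • proj (u k)) + E) *ᵥ x) := by
  have hE := neg_le_of_abs_le (abs_quadForm_le_delta hu E gj hS hx)
  calc α * (x ⬝ᵥ x)
      ≤ ∑ k ∈ S, (lam k - delta lam u j gj E * |lam k - lam j|) * (u k ⬝ᵥ x) ^ 2 := by
        rw [hu.dotProduct_self_of_mem_span hx, mul_sum]
        gcongr with k hk
        exact hα k hk
    _ ≤ ∑ k ∈ S, lam k * (u k ⬝ᵥ x) ^ 2 + x ⬝ᵥ (E *ᵥ x) := by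
        simp only [sub_mul, sum_sub_distrib, mul_assoc, ← mul_sum]
        linarith
    _ = x ⬝ᵥ (((∑ k, lam k • proj (u k)) + E) *ᵥ x) := by
        rw [add_mulVec, dotProduct_add, hu.quadForm_spectralSum_of_mem_span hx]

end Perturbation

section Eigenvalues

variable {d : ℕ} {lam lamh : Fin d → ℝ} {u uh : Fin d → Fin d → ℝ} {j : Fin d} {gj : ℝ}
  {E : Matrix (Fin d) (Fin d) ℝ}

lemma perturbed_eigenvalue_succ_le (hu : DotOrthonormal u) (huh : DotOrthonormal uh)
    (hlam : Antitone lam) (hlamh : Antitone lamh) (hsep : ∀ k, k ≠ j → lam k ≠ lam j)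
    (hdecomp : (∑ k, lam k • proj (u k)) + E = ∑ k, lamh k • proj (uh k))
    (hδ : delta lam u j gj E ≤ 1) {j1 : Fin d} (hj1 : (j1 : ℕ) = (j : ℕ) + 1) :
    lamh j1 - lam j1 ≤ delta lam u j gj E * (lam j - lam j1) := by
  set δ := delta lam u j gj E
  have hβ : ∀ k ∈ Ioi j, lam k + δ * |lam k - lam j| ≤ lam j1 + δ * (lam j - lam j1) := by
    intro k hk
    have hjk : j < k := mem_Ioi.mp hk
    have hj1k : lam k ≤ lam j1 := hlam (by rw [Fin.le_def]; rw [Fin.lt_def] at hjk; omega)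
    have hjj1 : lam j1 ≤ lam j := hlam (by rw [Fin.le_def]; omega)
    rw [abs_of_nonpos (by linarith)]
    linarith [mul_nonneg (sub_nonneg.mpr hδ) (sub_nonneg.mpr hj1k)]
  have hcard : d < #(Ioi j) + #(Iic j1) := by
    rw [Fin.card_Ioi, Fin.card_Iic]
    omega
  have := le_of_quadForm_bounds (A := ∑ k, lamh k • proj (uh k))
    (by rwa [hu.finrank_span_image, huh.finrank_span_image, Fintype.card_fin])
    (fun x hx => hdecomp ▸ quadForm_add_le hu (fun k hk => hsep k (mem_Ioi.mp hk).ne') hx hβ)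
    (fun x hx => huh.le_quadForm_spectralSum hx fun k hk => hlamh (mem_Iic.mp hk))
  linarith

lemma perturbed_eigenvalue_pred_ge (hu : DotOrthonormal u) (huh : DotOrthonormal uh)
    (hlam : Antitone lam) (hlamh : Antitone lamh) (hsep : ∀ k, k ≠ j → lam k ≠ lam j)
    (hdecomp : (∑ k, lam k • proj (u k)) + E = ∑ k, lamh k • proj (uh k))
    (hδ : delta lam u j gj E ≤ 1) {j0 : Fin d} (hj0 : (j0 : ℕ) + 1 = (j : ℕ)) :
    lamh j0 - lam j0 ≥ -(delta lam u j gj E * (lam j0 - lam j)) := by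
  set δ := delta lam u j gj E
  have hj0j : j0 < j := by rw [Fin.lt_def]; omega
  have hα : ∀ k ∈ Iic j0, lam j0 - δ * (lam j0 - lam j) ≤ lam k - δ * |lam k - lam j| := by
    intro k hk
    have hkj0 : k ≤ j0 := mem_Iic.mp hk
    have hj0k : lam j0 ≤ lam k := hlam hkj0
    have hjj0 : lam j ≤ lam j0 := hlam hj0j.le
    rw [abs_of_nonneg (by linarith)]
    linarith [mul_nonneg (sub_nonneg.mpr hδ) (sub_nonneg.mpr hj0k)]
  have hcard : d < #(Ici j0) + #(Iic j0) := by
    rw [Fin.card_Ici, Fin.card_Iic]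
    omega
  have := le_of_quadForm_bounds (A := ∑ k, lamh k • proj (uh k))
    (by rwa [huh.finrank_span_image, hu.finrank_span_image, Fintype.card_fin])
    (fun x hx => huh.quadForm_spectralSum_le hx fun k hk => hlamh (mem_Ici.mp hk))
    (fun x hx => hdecomp ▸ le_quadForm_add hu
      (fun k hk => hsep k ((mem_Iic.mp hk).trans_lt hj0j).ne) hx hα)
  linarith

end Eigenvalues

theorem stmt3_general {d : ℕ} (lam : Fin d → ℝ) (u : Fin d → Fin d → ℝ)
    (hON : ∀ k l, u k ⬝ᵥ u l = if k = l then (1 : ℝ) else 0)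
    (hlam : Antitone lam)
    (E : Matrix (Fin d) (Fin d) ℝ)
    (j : Fin d) (gj : ℝ) (hgj_pos : 0 < gj)
    (hgj : IsLeast {x : ℝ | ∃ k, k ≠ j ∧ x = |lam k - lam j|} gj)
    (lamh : Fin d → ℝ) (uh : Fin d → Fin d → ℝ)
    (hONh : ∀ k l, uh k ⬝ᵥ uh l = if k = l then (1 : ℝ) else 0)
    (hlamh : Antitone lamh)
    (hdecomp : (∑ k, lam k • proj (u k)) + E = ∑ k, lamh k • proj (uh k))
    (hdelta : delta lam u j gj E < 1 / 2)
    (j1 : Fin d) (hj1 : (j1 : ℕ) = (j : ℕ) + 1)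
    (j0 : Fin d) (hj0 : (j0 : ℕ) + 1 = (j : ℕ)) :
    lamh j1 - lam j1 ≤ delta lam u j gj E * (lam j - lam j1) ∧
      lamh j0 - lam j0 ≥ -(delta lam u j gj E * (lam j0 - lam j)) := by
  have hsep : ∀ k, k ≠ j → lam k ≠ lam j := fun k hk heq => by
    have := hgj.2 ⟨k, hk, rfl⟩
    rw [heq, sub_self, abs_zero] at this
    linarith
  have hδ : delta lam u j gj E ≤ 1 := by linarith
  exact ⟨perturbed_eigenvalue_succ_le hON hONh hlam hlamh hsep hdecomp hδ hj1,
    perturbed_eigenvalue_pred_ge hON hONh hlam hlamh hsep hdecomp hδ hj0⟩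

theorem stmt3 {d : ℕ} (lam : Fin d → ℝ) (u : Fin d → Fin d → ℝ)
    (hON : ∀ k l, u k ⬝ᵥ u l = if k = l then (1 : ℝ) else 0)
    (hlam : Antitone lam)
    (E : Matrix (Fin d) (Fin d) ℝ) (hE : E.IsSymm)
    (j : Fin d) (gj : ℝ) (hgj_pos : 0 < gj)
    (hgj : IsLeast {x : ℝ | ∃ k, k ≠ j ∧ x = |lam k - lam j|} gj)
    (lamh : Fin d → ℝ) (uh : Fin d → Fin d → ℝ)
    (hONh : ∀ k l, uh k ⬝ᵥ uh l = if k = l then (1 : ℝ) else 0)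
    (hlamh : Antitone lamh)
    (hdecomp : (∑ k, lam k • proj (u k)) + E = ∑ k, lamh k • proj (uh k))
    (hdelta : delta lam u j gj E < 1 / 2)
    (j1 : Fin d) (hj1 : (j1 : ℕ) = (j : ℕ) + 1)
    (j0 : Fin d) (hj0 : (j0 : ℕ) + 1 = (j : ℕ)) :
    lamh j1 - lam j1 ≤ delta lam u j gj E * (lam j - lam j1) ∧
      lamh j0 - lam j0 ≥ -(delta lam u j gj E * (lam j0 - lam j)) :=
  stmt3_general lam u hON hlam E j gj hgj_pos hgj lamh uh hONh hlamh hdecomp hdelta j1 hj1 j0 hj0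
end

section
/- Suppose δ_j < 1/2. Then ‖|R_j|^{1/2} E P̂_j‖_2 ≤ ‖|R_j|^{1/2} E P_j‖_2 + δ_j ‖|R_j|^{-1/2} P̂_j‖_2. -/
open Matrix Finset

/-!
Write `S = |R_j|^{1/2}`, `S' = |R_j|^{-1/2}`, `P = P_j` and `P̂_j = v vᵀ`. Since `S S' = I - P`,
`S E v = ⟨u_j, v⟩ S E u_j + (S E S) (S' v)`. The first term has norm at most `‖S E P‖₂` by
Cauchy–Schwarz, the second at most `‖S E S‖_∞ ‖S' P̂_j‖₂`, because the Hilbert–Schmidt norm of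
`A v vᵀ` is `‖A v‖`. Finally `S E S = (I - P) M (I - P)` for the matrix `M` with `‖M‖_∞ = δ_j`,
and `I - P` is an orthogonal projection, so `‖S E S‖_∞ ≤ δ_j`.
-/

open WithLp (toLp)

section EuclideanNorm

variable {n : Type*} [Fintype n]

lemma dotProduct_self_eq_norm_toLp_sq (x : n → ℝ) : x ⬝ᵥ x = ‖toLp 2 x‖ ^ 2 := by
  rw [← real_inner_self_eq_norm_sq, EuclideanSpace.inner_toLp_toLp, star_trivial]

lemma norm_toLp_eq_one {x : n → ℝ} (hx : x ⬝ᵥ x = 1) : ‖toLp 2 x‖ = 1 := by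
  rw [dotProduct_self_eq_norm_toLp_sq] at hx
  exact (pow_eq_one_iff_of_nonneg (norm_nonneg _) two_ne_zero).mp hx

lemma abs_dotProduct_le_norm_toLp_mul (x y : n → ℝ) :
    |x ⬝ᵥ y| ≤ ‖toLp 2 x‖ * ‖toLp 2 y‖ := by
  simpa [EuclideanSpace.inner_toLp_toLp, mul_comm] using
    abs_real_inner_le_norm (toLp 2 y) (toLp 2 x)

end EuclideanNorm

section MatrixNorms

variable {d : ℕ}

lemma hsNorm_nonneg (A : Matrix (Fin d) (Fin d) ℝ) : 0 ≤ hsNorm A := Real.sqrt_nonneg _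

lemma norm_toLp_mulVec_le (A : Matrix (Fin d) (Fin d) ℝ) (x : Fin d → ℝ) :
    ‖toLp 2 (A *ᵥ x)‖ ≤ opNorm A * ‖toLp 2 x‖ := by
  rw [← toEuclideanCLM_toLp]
  exact (toEuclideanCLM (𝕜 := ℝ) A).le_opNorm _

lemma opNorm_mul_mul_le_of_opNorm_le_one {Q : Matrix (Fin d) (Fin d) ℝ} (hQ : opNorm Q ≤ 1)
    (M : Matrix (Fin d) (Fin d) ℝ) : opNorm (Q * M * Q) ≤ opNorm M := by
  simp only [opNorm, map_mul] at hQ ⊢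
  grw [norm_mul₃_le, hQ, one_mul, hQ, mul_one]

lemma opNorm_le_one_of_isStarProjection {P : Matrix (Fin d) (Fin d) ℝ}
    (hP : IsStarProjection P) : opNorm P ≤ 1 :=
  (hP.map (toEuclideanCLM (n := Fin d) (𝕜 := ℝ))).norm_le

lemma hsNorm_vecMulVec (a b : Fin d → ℝ) :
    hsNorm (vecMulVec a b) = ‖toLp 2 a‖ * ‖toLp 2 b‖ := by
  rw [hsNorm, transpose_vecMulVec, vecMulVec_mul_vecMulVec, trace_vecMulVec, dotProduct_smul,
    smul_eq_mul, dotProduct_self_eq_norm_toLp_sq, dotProduct_self_eq_norm_toLp_sq, ← mul_pow,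
    mul_comm, Real.sqrt_sq (by positivity)]

lemma hsNorm_mul_proj (A : Matrix (Fin d) (Fin d) ℝ) {v : Fin d → ℝ} (hv : v ⬝ᵥ v = 1) :
    hsNorm (A * proj v) = ‖toLp 2 (A *ᵥ v)‖ := by
  rw [proj, mul_vecMulVec, hsNorm_vecMulVec, norm_toLp_eq_one hv, mul_one]

lemma isStarProjection_proj {w : Fin d → ℝ} (hw : w ⬝ᵥ w = 1) : IsStarProjection (proj w) where
  isIdempotentElem := by
    rw [IsIdempotentElem, proj, vecMulVec_mul_vecMulVec, hw, one_smul]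
  isSelfAdjoint := by
    rw [IsSelfAdjoint, star_eq_conjTranspose, conjTranspose_eq_transpose_of_trivial, proj,
      transpose_vecMulVec]

theorem hsNorm_mul_mul_proj_le {S S' E : Matrix (Fin d) (Fin d) ℝ} {v w : Fin d → ℝ}
    (hv : v ⬝ᵥ v = 1) (hw : w ⬝ᵥ w = 1) (hSS' : S * S' = 1 - proj w) :
    hsNorm (S * E * proj v) ≤
      hsNorm (S * E * proj w) + opNorm (S * E * S) * hsNorm (S' * proj v) := by
  rw [hsNorm_mul_proj _ hv, hsNorm_mul_proj _ hw, hsNorm_mul_proj _ hv]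
  have hsplit : (S * E) *ᵥ v = (w ⬝ᵥ v) • ((S * E) *ᵥ w) + (S * E * S) *ᵥ (S' *ᵥ v) := by
    rw [mulVec_mulVec, Matrix.mul_assoc (S * E), hSS', Matrix.mul_sub, Matrix.mul_one,
      sub_mulVec, ← mulVec_mulVec v (S * E) (proj w), proj, vecMulVec_mulVec, mulVec_smul]
    simp
  have hcoef : |w ⬝ᵥ v| ≤ 1 := by
    simpa [norm_toLp_eq_one hv, norm_toLp_eq_one hw] using abs_dotProduct_le_norm_toLp_mul w v
  calc ‖toLp 2 ((S * E) *ᵥ v)‖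
      = ‖(w ⬝ᵥ v) • toLp 2 ((S * E) *ᵥ w) + toLp 2 ((S * E * S) *ᵥ (S' *ᵥ v))‖ := by
        rw [hsplit]; rfl
    _ ≤ |w ⬝ᵥ v| * ‖toLp 2 ((S * E) *ᵥ w)‖ + ‖toLp 2 ((S * E * S) *ᵥ (S' *ᵥ v))‖ := by
        grw [norm_add_le, norm_smul, Real.norm_eq_abs]
    _ ≤ ‖toLp 2 ((S * E) *ᵥ w)‖ + opNorm (S * E * S) * ‖toLp 2 (S' *ᵥ v)‖ := by
        gcongr
        · exact mul_le_of_le_one_left (norm_nonneg _) hcoef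
        · exact norm_toLp_mulVec_le _ _

end MatrixNorms

section Orthonormal

variable {d : ℕ} {u : Fin d → Fin d → ℝ}

lemma proj_mul_proj_of_orthonormal (hON : ∀ k l, u k ⬝ᵥ u l = if k = l then (1 : ℝ) else 0)
    (k l : Fin d) : proj (u k) * proj (u l) = if k = l then proj (u k) else 0 := by
  rw [proj, proj, vecMulVec_mul_vecMulVec, hON]
  split_ifs with hkl
  · rw [one_smul, hkl]
  · rw [zero_smul, vecMulVec_zero]

lemma sum_proj_eq_one_of_orthonormal
    (hON : ∀ k l, u k ⬝ᵥ u l = if k = l then (1 : ℝ) else 0) : ∑ k, proj (u k) = 1 := by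
  have hU : of u * (of u)ᵀ = 1 := by
    ext k l
    rw [mul_apply, one_apply, ← hON k l]
    rfl
  ext i l
  have h : ((of u)ᵀ * of u) i l = (1 : Matrix (Fin d) (Fin d) ℝ) i l := by
    rw [mul_eq_one_comm.mp hU]
  simpa [proj, Matrix.sum_apply, mul_apply, vecMulVec_apply] using h

lemma sum_smul_proj_mul_sum_smul_proj
    (hON : ∀ k l, u k ⬝ᵥ u l = if k = l then (1 : ℝ) else 0) (s : Finset (Fin d))
    (f g : Fin d → ℝ) :
    (∑ k ∈ s, f k • proj (u k)) * (∑ k ∈ s, g k • proj (u k)) =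
      ∑ k ∈ s, (f k * g k) • proj (u k) := by
  rw [Finset.sum_mul_sum]
  refine Finset.sum_congr rfl fun k hk => ?_
  rw [Finset.sum_eq_single_of_mem k hk fun l _ hlk => ?_]
  · rw [smul_mul_smul_comm, proj_mul_proj_of_orthonormal hON, if_pos rfl]
  · rw [smul_mul_smul_comm, proj_mul_proj_of_orthonormal hON, if_neg hlk.symm, smul_zero]

lemma proj_mul_sum_smul_proj_of_notMem
    (hON : ∀ k l, u k ⬝ᵥ u l = if k = l then (1 : ℝ) else 0) {s : Finset (Fin d)} {j : Fin d}
    (hj : j ∉ s) (f : Fin d → ℝ) : proj (u j) * ∑ k ∈ s, f k • proj (u k) = 0 := by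
  rw [Finset.mul_sum]
  refine Finset.sum_eq_zero fun k hk => ?_
  rw [Matrix.mul_smul, proj_mul_proj_of_orthonormal hON, if_neg (ne_of_mem_of_not_mem hk hj).symm,
    smul_zero]

lemma sum_smul_proj_mul_proj_of_notMem
    (hON : ∀ k l, u k ⬝ᵥ u l = if k = l then (1 : ℝ) else 0) {s : Finset (Fin d)} {j : Fin d}
    (hj : j ∉ s) (f : Fin d → ℝ) : (∑ k ∈ s, f k • proj (u k)) * proj (u j) = 0 := by
  rw [Finset.sum_mul]
  refine Finset.sum_eq_zero fun k hk => ?_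
  rw [Matrix.smul_mul, proj_mul_proj_of_orthonormal hON, if_neg (ne_of_mem_of_not_mem hk hj),
    smul_zero]

end Orthonormal

section ReducedResolvent

variable {d : ℕ} {lam : Fin d → ℝ} {u : Fin d → Fin d → ℝ} {j : Fin d}

lemma sqrtAbsRes_mul_invSqrtAbsRes
    (hON : ∀ k l, u k ⬝ᵥ u l = if k = l then (1 : ℝ) else 0) (hgap : ∀ k ≠ j, lam k ≠ lam j) :
    sqrtAbsRes lam u j * invSqrtAbsRes lam u j = 1 - proj (u j) := by
  rw [sqrtAbsRes, invSqrtAbsRes, sum_smul_proj_mul_sum_smul_proj hON]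
  have hcancel : ∀ k ∈ Finset.univ.filter (fun k => k ≠ j),
      ((Real.sqrt |lam k - lam j|)⁻¹ * Real.sqrt |lam k - lam j|) • proj (u k) = proj (u k) := by
    intro k hk
    have hpos : 0 < Real.sqrt |lam k - lam j| :=
      Real.sqrt_pos.mpr (abs_pos.mpr (sub_ne_zero.mpr (hgap k (Finset.mem_filter.mp hk).2)))
    rw [inv_mul_cancel₀ hpos.ne', one_smul]
  rw [Finset.sum_congr rfl hcancel, Finset.filter_ne', Finset.sum_erase_eq_sub (Finset.mem_univ j),
    sum_proj_eq_one_of_orthonormal hON]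

lemma sqrtAbsRes_mul_mul_sqrtAbsRes_eq
    (hON : ∀ k l, u k ⬝ᵥ u l = if k = l then (1 : ℝ) else 0) (c : ℝ)
    (E : Matrix (Fin d) (Fin d) ℝ) :
    sqrtAbsRes lam u j * E * sqrtAbsRes lam u j =
      (1 - proj (u j)) *
        ((sqrtAbsRes lam u j + c • proj (u j)) * E * (sqrtAbsRes lam u j + c • proj (u j))) *
          (1 - proj (u j)) := by
  have hPP : proj (u j) * proj (u j) = proj (u j) := by
    rw [proj_mul_proj_of_orthonormal hON, if_pos rfl]
  have hPS : proj (u j) * sqrtAbsRes lam u j = 0 :=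
    proj_mul_sum_smul_proj_of_notMem hON (by simp) _
  have hSP : sqrtAbsRes lam u j * proj (u j) = 0 :=
    sum_smul_proj_mul_proj_of_notMem hON (by simp) _
  have hleft : (1 - proj (u j)) * (sqrtAbsRes lam u j + c • proj (u j)) = sqrtAbsRes lam u j := by
    rw [sub_mul, one_mul, mul_add, hPS, Matrix.mul_smul, hPP, zero_add, add_sub_cancel_right]
  have hright : (sqrtAbsRes lam u j + c • proj (u j)) * (1 - proj (u j)) = sqrtAbsRes lam u j := by
    rw [mul_sub, mul_one, add_mul, hSP, Matrix.smul_mul, hPP, zero_add, add_sub_cancel_right]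
  simp only [← Matrix.mul_assoc, hleft]
  rw [Matrix.mul_assoc _ _ (1 - proj (u j)), hright]

lemma opNorm_sqrtAbsRes_mul_mul_sqrtAbsRes_le_delta
    (hON : ∀ k l, u k ⬝ᵥ u l = if k = l then (1 : ℝ) else 0) (gj : ℝ)
    (E : Matrix (Fin d) (Fin d) ℝ) :
    opNorm (sqrtAbsRes lam u j * E * sqrtAbsRes lam u j) ≤ delta lam u j gj E := by
  have hQ : opNorm (1 - proj (u j)) ≤ 1 :=
    opNorm_le_one_of_isStarProjection (isStarProjection_proj (by simpa using hON j j)).one_sub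
  rw [sqrtAbsRes_mul_mul_sqrtAbsRes_eq hON (Real.sqrt gj)⁻¹]
  exact opNorm_mul_mul_le_of_opNorm_le_one hQ _

end ReducedResolvent

theorem stmt15_general {d : ℕ} (lam : Fin d → ℝ) (u : Fin d → Fin d → ℝ)
    (hON : ∀ k l, u k ⬝ᵥ u l = if k = l then (1 : ℝ) else 0)
    (E : Matrix (Fin d) (Fin d) ℝ)
    (j : Fin d) (gj : ℝ) (hgj_pos : 0 < gj)
    (hgj : IsLeast {x : ℝ | ∃ k, k ≠ j ∧ x = |lam k - lam j|} gj)
    (uh : Fin d → Fin d → ℝ)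
    (hONh : ∀ k l, uh k ⬝ᵥ uh l = if k = l then (1 : ℝ) else 0) :
    hsNorm (sqrtAbsRes lam u j * E * proj (uh j)) ≤
      hsNorm (sqrtAbsRes lam u j * E * proj (u j)) +
        delta lam u j gj E * hsNorm (invSqrtAbsRes lam u j * proj (uh j)) := by
  have hgap : ∀ k ≠ j, lam k ≠ lam j := fun k hk hkj => by
    have := hgj.2 ⟨k, hk, rfl⟩
    rw [hkj, sub_self, abs_zero] at this
    linarith
  calc _ ≤ hsNorm (sqrtAbsRes lam u j * E * proj (u j)) +
        opNorm (sqrtAbsRes lam u j * E * sqrtAbsRes lam u j) *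
          hsNorm (invSqrtAbsRes lam u j * proj (uh j)) :=
        hsNorm_mul_mul_proj_le (by simpa using hONh j j) (by simpa using hON j j)
          (sqrtAbsRes_mul_invSqrtAbsRes hON hgap)
    _ ≤ _ := by
        gcongr
        · exact hsNorm_nonneg _
        · exact opNorm_sqrtAbsRes_mul_mul_sqrtAbsRes_le_delta hON gj E

theorem stmt15 {d : ℕ} (lam : Fin d → ℝ) (u : Fin d → Fin d → ℝ)
    (hON : ∀ k l, u k ⬝ᵥ u l = if k = l then (1 : ℝ) else 0)
    (hlam : Antitone lam)
    (E : Matrix (Fin d) (Fin d) ℝ) (hE : E.IsSymm)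
    (j : Fin d) (gj : ℝ) (hgj_pos : 0 < gj)
    (hgj : IsLeast {x : ℝ | ∃ k, k ≠ j ∧ x = |lam k - lam j|} gj)
    (lamh : Fin d → ℝ) (uh : Fin d → Fin d → ℝ)
    (hONh : ∀ k l, uh k ⬝ᵥ uh l = if k = l then (1 : ℝ) else 0)
    (hlamh : Antitone lamh)
    (hdecomp : (∑ k, lam k • proj (u k)) + E = ∑ k, lamh k • proj (uh k))
    (hdelta : delta lam u j gj E < 1 / 2) :
    hsNorm (sqrtAbsRes lam u j * E * proj (uh j)) ≤
      hsNorm (sqrtAbsRes lam u j * E * proj (u j)) +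
        delta lam u j gj E * hsNorm (invSqrtAbsRes lam u j * proj (uh j)) :=
  stmt15_general lam u hON E j gj hgj_pos hgj uh hONh
end
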